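/- Let k > l ≥ 1 and n ≥ k - 1 + 2l. The graph G = K_{k-1} + K_{⌊(n-k+1)/2⌋, ⌈(n-k+1)/2⌉} (join of a clique on k-1 vertices with a balanced complete bipartite graph) contains no k pairwise vertex-disjoint triangles, and the number of copies of lK_3 (l pairwise vertex-disjoint triangles) in G is at least C(k-1, l) · (1/l!) · ∏_{i=0}^{l-1} ⌊(n-k+1-2i)²/4⌋. -/

import Mathlib

open SimpleGraph

universe u v

/-- An (injective) copy of the graph `F` inside the graph `G`. -/
structure GraphCopy {α : Type u} {β : Type v} (F : SimpleGraph α) (G : SimpleGraph β) where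
  toFun : α → β
  inj : Function.Injective toFun
  adj : ∀ {a b : α}, F.Adj a b → G.Adj (toFun a) (toFun b)

/-- `G` contains a copy of `F` (i.e. a subgraph isomorphic to `F`). -/
def Contains {α : Type u} {β : Type v} (F : SimpleGraph α) (G : SimpleGraph β) : Prop :=
  Nonempty (GraphCopy F G)

/-- `G` contains `k` pairwise vertex-disjoint copies of `F`. -/
def HasDisjCopies {α : Type u} {β : Type v} (F : SimpleGraph α) (G : SimpleGraph β)
    (k : ℕ) : Prop :=
  ∃ c : Fin k → GraphCopy F G,
    ∀ i j : Fin k, i ≠ j → Disjoint (Set.range (c i).toFun) (Set.range (c j).toFun)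

/-- The join of two graphs: their disjoint union together with all cross edges. -/
def gJoin {α : Type u} {β : Type v} (G : SimpleGraph α) (H : SimpleGraph β) :
    SimpleGraph (α ⊕ β) where
  Adj x y :=
    match x, y with
    | Sum.inl a, Sum.inl b => G.Adj a b
    | Sum.inr a, Sum.inr b => H.Adj a b
    | _, _ => True
  symm := ⟨by rintro (a | a) (b | b) h <;> first | exact h.symm | trivial⟩
  loopless := ⟨by rintro (a | a) h; exacts [G.ne_of_adj h rfl, H.ne_of_adj h rfl]⟩

/-- The Turán number: maximum number of edges of an `n`-vertex `F`-free graph. -/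
noncomputable def exNum {α : Type u} (n : ℕ) (F : SimpleGraph α) : ℕ :=
  sSup {m : ℕ | ∃ G : SimpleGraph (Fin n), ¬ Contains F G ∧ m = G.edgeSet.ncard}

/-- The number of (unlabeled) copies of `H` in `G`, i.e. the number of subgraphs of `G`
isomorphic to `H`. -/
noncomputable def copyCount {α : Type u} {β : Type v} (H : SimpleGraph α)
    (G : SimpleGraph β) : ℕ :=
  {A : G.Subgraph | Nonempty (H ≃g A.coe)}.ncard

/-- The generalized Turán number: maximum number of copies of `H` in an
`n`-vertex `F`-free graph. -/
noncomputable def exGen {α : Type u} {γ : Type v} (n : ℕ) (H : SimpleGraph α)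
    (F : SimpleGraph γ) : ℕ :=
  sSup {m : ℕ | ∃ G : SimpleGraph (Fin n), ¬ Contains F G ∧ m = copyCount H G}

/-- `s` is a matching in `G`: a set of edges of `G`, pairwise vertex-disjoint. -/
def IsMatchingSet {V : Type u} (G : SimpleGraph V) (s : Finset (Sym2 V)) : Prop :=
  ↑s ⊆ G.edgeSet ∧ ∀ e ∈ s, ∀ f ∈ s, e ≠ f → ∀ x : V, x ∈ e → x ∉ f

/-- The number of matchings of size `l` in `G`. -/
noncomputable def matchCount {V : Type u} (G : SimpleGraph V) (l : ℕ) : ℕ :=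
  {s : Finset (Sym2 V) | s.card = l ∧ IsMatchingSet G s}.ncard

/-- `G` contains `k` pairwise vertex-disjoint triangles. -/
def HasDisjTriangles {V : Type u} (G : SimpleGraph V) (k : ℕ) : Prop :=
  ∃ S : Finset (Finset V), S.card = k ∧ (∀ T ∈ S, G.IsNClique 3 T) ∧
    (S : Set (Finset V)).Pairwise fun T T' => Disjoint T T'

/-- The number of copies of `lK₃` (families of `l` pairwise disjoint triangles) in `G`. -/
noncomputable def disjTriFamCount {V : Type u} (G : SimpleGraph V) (l : ℕ) : ℕ :=
  {S : Finset (Finset V) | S.card = l ∧ (∀ T ∈ S, G.IsNClique 3 T) ∧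
    (S : Set (Finset V)).Pairwise fun T T' => Disjoint T T'}.ncard

/-- The graph `K_{k-1} + K_{⌊(n-k+1)/2⌋, ⌈(n-k+1)/2⌉}`. -/
def joinGraph19 (k n : ℕ) :
    SimpleGraph (Fin (k - 1) ⊕ (Fin ((n - k + 1) / 2) ⊕ Fin ((n - k + 1) - (n - k + 1) / 2))) :=
  gJoin (⊤ : SimpleGraph (Fin (k - 1)))
    (completeBipartiteGraph (Fin ((n - k + 1) / 2)) (Fin ((n - k + 1) - (n - k + 1) / 2)))

/-!
The bipartite part is triangle-free, so every triangle of the join meets the clique and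
disjoint triangles number at most `k - 1`. Conversely, `l` distinct clique vertices `a_i`,
listed in increasing order, together with injective choices of `b_i` and `c_i` in the two
sides give the family of triangles `{a_i, b_i, c_i}`, and distinct choices give distinct
families; there are `C(k-1, l) · (⌊m/2⌋)_l · (⌈m/2⌉)_l` of them with `m = n - k + 1`, which is
the bound because `⌊(m - 2i)² / 4⌋ = (⌊m/2⌋ - i)(⌈m/2⌉ - i)`.
-/

open Finset Function

namespace gJoin

variable {α β : Type*} {G : SimpleGraph α} {H : SimpleGraph β}

@[simp] lemma adj_inr_inr {b b' : β} : (gJoin G H).Adj (.inr b) (.inr b') ↔ H.Adj b b' := Iff.rfl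

@[simp] lemma adj_inl_inr {a : α} {b : β} : (gJoin G H).Adj (.inl a) (.inr b) := trivial

lemma exists_inl_mem_of_isNClique_three (hH : H.CliqueFree 3) {T : Finset (α ⊕ β)}
    (hT : (gJoin G H).IsNClique 3 T) : ∃ a, .inl a ∈ T := by
  classical
  by_contra! hT_inr
  refine hH (T.preimage Sum.inr Sum.inr_injective.injOn) ⟨fun b hb b' hb' hbb' => ?_, ?_⟩
  · simpa using hT.1 (mem_preimage.mp hb) (mem_preimage.mp hb') (by simpa using hbb')
  · rw [card_preimage, filter_true_of_mem, hT.2]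
    rintro (a | b) hx
    exacts [(hT_inr a hx).elim, Set.mem_range_self b]

lemma le_card_of_hasDisjTriangles [Fintype α] {k : ℕ} (hH : H.CliqueFree 3)
    (h : HasDisjTriangles (gJoin G H) k) : k ≤ Fintype.card α := by
  obtain ⟨S, rfl, hS, hdisj⟩ := h
  choose f hf using fun T : S => exists_inl_mem_of_isNClique_three hH (hS T T.2)
  have hf_inj : Injective f := fun T T' hTT' => by
    by_contra hne
    exact Finset.disjoint_left.mp (hdisj T.2 T'.2 (Subtype.coe_ne_coe.mpr hne)) (hf T)
      (hTT' ▸ hf T')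
  simpa using Fintype.card_le_of_injective f hf_inj

end gJoin

lemma completeBipartiteGraph_cliqueFree_three (β γ : Type*) :
    (completeBipartiteGraph β γ).CliqueFree 3 :=
  (CompleteBipartiteGraph.bicoloring β γ).colorable.cliqueFree (by simp)

section JoinTriangle

variable {α β γ : Type*} [DecidableEq α] [DecidableEq β] [DecidableEq γ]

def joinTriangle (a : α) (b : β) (c : γ) : Finset (α ⊕ β ⊕ γ) :=
  {.inl a, .inr (.inl b), .inr (.inr c)}

@[simp] lemma inl_mem_joinTriangle {a a' : α} {b : β} {c : γ} :
    .inl a' ∈ joinTriangle a b c ↔ a' = a := by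
  simp [joinTriangle]

@[simp] lemma inr_inl_mem_joinTriangle {a : α} {b b' : β} {c : γ} :
    .inr (.inl b') ∈ joinTriangle a b c ↔ b' = b := by
  simp [joinTriangle]

@[simp] lemma inr_inr_mem_joinTriangle {a : α} {b : β} {c c' : γ} :
    .inr (.inr c') ∈ joinTriangle a b c ↔ c' = c := by
  simp [joinTriangle]

lemma isNClique_joinTriangle (G : SimpleGraph α) (a : α) (b : β) (c : γ) :
    (gJoin G (completeBipartiteGraph β γ)).IsNClique 3 (joinTriangle a b c) := by
  refine ⟨?_, by simp [joinTriangle]⟩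
  simp [joinTriangle, Set.pairwise_insert, SimpleGraph.adj_comm]

lemma joinTriangle_inj {a a' : α} {b b' : β} {c c' : γ}
    (h : joinTriangle a b c = joinTriangle a' b' c') : a = a' ∧ b = b' ∧ c = c' := by
  have ha : .inl a ∈ joinTriangle a' b' c' := h ▸ inl_mem_joinTriangle.mpr rfl
  have hb : .inr (.inl b) ∈ joinTriangle a' b' c' := h ▸ inr_inl_mem_joinTriangle.mpr rfl
  have hc : .inr (.inr c) ∈ joinTriangle a' b' c' := h ▸ inr_inr_mem_joinTriangle.mpr rfl
  simp_all

lemma disjoint_joinTriangle {a a' : α} {b b' : β} {c c' : γ} (ha : a ≠ a') (hb : b ≠ b')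
    (hc : c ≠ c') : Disjoint (joinTriangle a b c) (joinTriangle a' b' c') := by
  rw [Finset.disjoint_left]
  rintro (x | x | x) <;> simp_all

variable {l : ℕ}

def joinTriangleFamily (c : Fin l → α) (x : Fin l → β) (y : Fin l → γ) :
    Finset (Finset (α ⊕ β ⊕ γ)) :=
  univ.image fun i => joinTriangle (c i) (x i) (y i)

lemma joinTriangleFamily_card_isNClique_pairwise_disjoint (G : SimpleGraph α) {c : Fin l → α}
    {x : Fin l → β} {y : Fin l → γ} (hc : Injective c) (hx : Injective x) (hy : Injective y) :
    (joinTriangleFamily c x y).card = l ∧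
      (∀ T ∈ joinTriangleFamily c x y, (gJoin G (completeBipartiteGraph β γ)).IsNClique 3 T) ∧
      (joinTriangleFamily c x y : Set (Finset (α ⊕ β ⊕ γ))).Pairwise Disjoint := by
  refine ⟨?_, ?_, ?_⟩
  · rw [joinTriangleFamily, card_image_of_injective _ fun i j hij => hc (joinTriangle_inj hij).1,
      card_univ, Fintype.card_fin]
  · simp only [joinTriangleFamily, mem_image, mem_univ, true_and, forall_exists_index]
    rintro _ i rfl
    exact isNClique_joinTriangle G _ _ _
  · simp only [joinTriangleFamily, coe_image, coe_univ, Set.image_univ]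
    rintro _ ⟨i, rfl⟩ _ ⟨j, rfl⟩ hne
    have hij : i ≠ j := fun h => hne (h ▸ rfl)
    exact disjoint_joinTriangle (hc.ne hij) (hx.ne hij) (hy.ne hij)

lemma range_eq_of_joinTriangleFamily_eq {c c' : Fin l → α} {x x' : Fin l → β}
    {y y' : Fin l → γ} (h : joinTriangleFamily c x y = joinTriangleFamily c' x' y') :
    Set.range c = Set.range c' := by
  have key : ∀ (c : Fin l → α) (x : Fin l → β) (y : Fin l → γ),
      Set.range c = {a | ∃ T ∈ joinTriangleFamily c x y, .inl a ∈ T} := by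
    intro c x y
    ext a
    simp [joinTriangleFamily, eq_comm]
  rw [key c x y, key c' x' y', h]

lemma eq_of_joinTriangleFamily_eq {c : Fin l → α} (hc : Injective c) {x x' : Fin l → β}
    {y y' : Fin l → γ} (h : joinTriangleFamily c x y = joinTriangleFamily c x' y') :
    x = x' ∧ y = y' := by
  have key : ∀ i, x i = x' i ∧ y i = y' i := by
    intro i
    have hi : joinTriangle (c i) (x i) (y i) ∈ joinTriangleFamily c x' y' :=
      h ▸ mem_image_of_mem _ (mem_univ i)
    obtain ⟨j, -, hj⟩ := mem_image.mp hi
    obtain ⟨hcj, hxj, hyj⟩ := joinTriangle_inj hj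
    obtain rfl := hc hcj
    exact ⟨hxj.symm, hyj.symm⟩
  exact ⟨funext fun i => (key i).1, funext fun i => (key i).2⟩

end JoinTriangle

lemma choose_mul_descFactorial_mul_descFactorial_le_disjTriFamCount {α β γ : Type*}
    [Fintype α] [LinearOrder α] [Fintype β] [Fintype γ] (G : SimpleGraph α) (l : ℕ) :
    (Fintype.card α).choose l *
        ((Fintype.card β).descFactorial l * (Fintype.card γ).descFactorial l) ≤
      disjTriFamCount (gJoin G (completeBipartiteGraph β γ)) l := by
  classical
  let Φ : {A : Finset α // A.card = l} × (Fin l ↪ β) × (Fin l ↪ γ) →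
      {S : Finset (Finset (α ⊕ β ⊕ γ)) | S.card = l ∧
        (∀ T ∈ S, (gJoin G (completeBipartiteGraph β γ)).IsNClique 3 T) ∧
        (S : Set (Finset (α ⊕ β ⊕ γ))).Pairwise fun T T' => Disjoint T T'} :=
    fun d => ⟨joinTriangleFamily (d.1.1.orderEmbOfFin d.1.2) d.2.1 d.2.2,
      joinTriangleFamily_card_isNClique_pairwise_disjoint G
        (d.1.1.orderEmbOfFin d.1.2).injective d.2.1.injective d.2.2.injective⟩
  have hΦ : Injective Φ := by
    rintro ⟨⟨A, hA⟩, x, y⟩ ⟨⟨A', hA'⟩, x', y'⟩ h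
    have hfam := congrArg Subtype.val h
    obtain rfl : A = A' := by
      simpa [range_orderEmbOfFin] using range_eq_of_joinTriangleFamily_eq hfam
    obtain ⟨hx, hy⟩ := eq_of_joinTriangleFamily_eq (A.orderEmbOfFin hA).injective hfam
    exact Prod.ext rfl (Prod.ext (DFunLike.coe_injective hx) (DFunLike.coe_injective hy))
  simpa [disjTriFamCount, ← Nat.card_coe_set_eq, Fintype.card_finset_len,
    Fintype.card_embedding_eq] using Nat.card_le_card_of_injective Φ hΦ

lemma Nat.sub_two_mul_sq_div_four (m i : ℕ) :
    (m - 2 * i) ^ 2 / 4 = (m / 2 - i) * (m - m / 2 - i) := by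
  obtain hmi | hmi := le_or_gt (2 * i) m
  · have hsq : (m - 2 * i) ^ 2 = 4 * ((m / 2 - i) * (m - m / 2 - i)) + m % 2 := by
      rw [show m - 2 * i = 2 * (m / 2 - i) + m % 2 by omega,
        show m - m / 2 - i = m / 2 - i + m % 2 by omega]
      rcases Nat.mod_two_eq_zero_or_one m with hm | hm <;> rw [hm] <;> ring
    omega
  · rw [Nat.sub_eq_zero_of_le hmi.le, Nat.sub_eq_zero_of_le (by omega)]
    simp

lemma Nat.prod_range_sub_two_mul_sq_div_four (m l : ℕ) :
    ∏ i ∈ range l, (m - 2 * i) ^ 2 / 4 =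
      (m / 2).descFactorial l * (m - m / 2).descFactorial l := by
  simp only [Nat.descFactorial_eq_prod_range, ← prod_mul_distrib, Nat.sub_two_mul_sq_div_four]

theorem stmt19_general (k l n : ℕ) (hkl : l < k) :
    ¬ HasDisjTriangles (joinGraph19 k n) k
    ∧ (k - 1).choose l * ∏ i ∈ Finset.range l, (n - k + 1 - 2 * i) ^ 2 / 4 ≤
        disjTriFamCount (joinGraph19 k n) l * l.factorial := by
  refine ⟨fun h => ?_, ?_⟩
  · have hk := gJoin.le_card_of_hasDisjTriangles (completeBipartiteGraph_cliqueFree_three _ _) h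
    simp only [Fintype.card_fin] at hk
    omega
  · have hcount := choose_mul_descFactorial_mul_descFactorial_le_disjTriFamCount
      (⊤ : SimpleGraph (Fin (k - 1))) (β := Fin ((n - k + 1) / 2))
      (γ := Fin (n - k + 1 - (n - k + 1) / 2)) l
    simp only [Fintype.card_fin] at hcount
    rw [Nat.prod_range_sub_two_mul_sq_div_four]
    exact hcount.trans (Nat.le_mul_of_pos_right _ l.factorial_pos)

/-- `K_{k-1} + K_{⌊(n-k+1)/2⌋,⌈(n-k+1)/2⌉}` has no `k` disjoint
triangles, and contains at least `C(k-1,l)·(1/l!)·∏_{i<l} ⌊(n-k+1-2i)²/4⌋` copies of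
`lK₃`. -/
theorem stmt19 (k l n : ℕ) (hkl : l < k) (hl : 1 ≤ l) (hn : k - 1 + 2 * l ≤ n) :
    ¬ HasDisjTriangles (joinGraph19 k n) k
    ∧ (k - 1).choose l * ∏ i ∈ Finset.range l, (n - k + 1 - 2 * i) ^ 2 / 4 ≤
        disjTriFamCount (joinGraph19 k n) l * l.factorial :=
  stmt19_general k l n hkl
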